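/- arXiv:1211.1903 — 3 statements merged into one kernel-verified Lean document; each statement's English description precedes it below -/
import Mathlib

section
/- Let 0 < x_i < x_{i+1} < 1, a > 0, b real, α = b/a, and write φ(x) = x/(1-x). If α ≠ 0, the function v(x) = (C₂ - C₁·φ(x)^{-α}) with constants C₁, C₂ chosen so that v(x_i) = u_i and v(x_{i+1}) = u_{i+1} solves the two-point boundary value problem (a·x(1-x)·v' + b·v)' = 0 on (x_i, x_{i+1}), and the constant flux a·x(1-x)·v' + b·v equals b·(φ(x_{i+1})^α u_{i+1} - φ(x_i)^α u_i)/(φ(x_{i+1})^α - φ(x_i)^α). -/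
/-!
With `φ x = x / (1 - x)` one has `x (1 - x) φ' = φ`, so `x (1 - x) (φ ^ p)' = p φ ^ p` on `(0, 1)`.
Hence for `v = C₂ - C₁ φ ^ (-α)` and `b = a α` the terms in `C₁` cancel and the flux
`a x (1 - x) v' + b v` is the constant `b C₂`; solving the two boundary conditions for `C₂`
gives the stated formula, the denominator being nonzero because `φ` and `t ↦ t ^ α` are injective.
-/

open Set

lemma hasDerivAt_div_one_sub_rpow {x : ℝ} (hx : x ∈ Ioo (0 : ℝ) 1) (p : ℝ) :
    HasDerivAt (fun y => (y / (1 - y)) ^ p) (p * (x / (1 - x)) ^ p / (x * (1 - x))) x := by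
  have hx₀ : x ≠ 0 := hx.1.ne'
  have hx₁ : 1 - x ≠ 0 := (sub_pos.mpr hx.2).ne'
  have hφ : HasDerivAt (fun y : ℝ => y / (1 - y)) (1 / (1 - x) ^ 2) x :=
    ((hasDerivAt_id' x).div ((hasDerivAt_id' x).const_sub 1) hx₁).congr_deriv (by ring)
  convert hφ.rpow_const (p := p) (Or.inl (div_ne_zero hx₀ hx₁)) using 1
  rw [Real.rpow_sub_one (div_ne_zero hx₀ hx₁)]
  field_simp

lemma div_one_sub_injOn : InjOn (fun x : ℝ => x / (1 - x)) {x | x ≠ 1} := by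
  intro x hx y hy hxy
  have hx₁ : 1 - x ≠ 0 := sub_ne_zero.mpr (Ne.symm hx)
  have hy₁ : 1 - y ≠ 0 := sub_ne_zero.mpr (Ne.symm hy)
  rw [div_eq_div_iff hx₁ hy₁] at hxy
  linarith

lemma flux_eqOn_const {a α C₁ C₂ : ℝ} {v : ℝ → ℝ}
    (hv : ∀ x, v x = C₂ - C₁ * (x / (1 - x)) ^ (-α)) :
    EqOn (fun x => a * x * (1 - x) * deriv v x + a * α * v x) (fun _ => a * α * C₂)
      (Ioo 0 1) := by
  intro x hx
  have hv' : v = fun y => C₂ - C₁ * (y / (1 - y)) ^ (-α) := funext hv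
  have hdv : deriv v x = C₁ * α * (x / (1 - x)) ^ (-α) / (x * (1 - x)) := by
    rw [hv', ((hasDerivAt_div_one_sub_rpow hx (-α)).const_mul C₁).const_sub C₂ |>.deriv]
    ring
  have hx₀ : x ≠ 0 := hx.1.ne'
  have hx₁ : 1 - x ≠ 0 := (sub_pos.mpr hx.2).ne'
  simp only [hdv, hv x]
  field_simp
  ring

lemma eq_div_of_rpow_neg_boundary {p q α C₁ C₂ u w : ℝ} (hp : 0 < p) (hq : 0 < q)
    (hpq : p ≠ q) (hα : α ≠ 0) (hu : C₂ - C₁ * p ^ (-α) = u) (hw : C₂ - C₁ * q ^ (-α) = w) :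
    C₂ = (q ^ α * w - p ^ α * u) / (q ^ α - p ^ α) := by
  have hpα : p ^ α ≠ 0 := (Real.rpow_pos_of_pos hp α).ne'
  have hqα : q ^ α ≠ 0 := (Real.rpow_pos_of_pos hq α).ne'
  have hden : q ^ α - p ^ α ≠ 0 :=
    sub_ne_zero.mpr fun h => hpq (Real.rpow_left_injOn hα hp.le hq.le h.symm)
  subst hu hw
  rw [Real.rpow_neg hp.le, Real.rpow_neg hq.le]
  field_simp
  ring

theorem stmt_6 (xi xi1 a b α C₁ C₂ ui ui1 : ℝ)
    (h0 : 0 < xi) (h1 : xi < xi1) (h2 : xi1 < 1)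
    (ha : 0 < a) (hα : α = b / a) (hα0 : α ≠ 0)
    (v : ℝ → ℝ)
    (hv : ∀ x, v x = C₂ - C₁ * (x / (1 - x)) ^ (-α))
    (hbc1 : v xi = ui) (hbc2 : v xi1 = ui1) :
    (∀ x ∈ Set.Ioo xi xi1,
      deriv (fun y => a * y * (1 - y) * deriv v y + b * v y) x = 0) ∧
    (∀ x ∈ Set.Ioo xi xi1,
      a * x * (1 - x) * deriv v x + b * v x =
        b * ((xi1 / (1 - xi1)) ^ α * ui1 - (xi / (1 - xi)) ^ α * ui) /
          ((xi1 / (1 - xi1)) ^ α - (xi / (1 - xi)) ^ α)) := by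
  have hb : b = a * α := by rw [hα]; field_simp
  have hsub : Ioo xi xi1 ⊆ Ioo 0 1 := Ioo_subset_Ioo h0.le h2.le
  have hflux := flux_eqOn_const (a := a) hv
  rw [← hb] at hflux
  have hφ₀ : 0 < xi / (1 - xi) := div_pos h0 (by linarith)
  have hφ₁ : 0 < xi1 / (1 - xi1) := div_pos (by linarith) (by linarith)
  have hφne : xi / (1 - xi) ≠ xi1 / (1 - xi1) := fun h =>
    h1.ne (div_one_sub_injOn (h1.trans h2).ne h2.ne h)
  have hC₂ := eq_div_of_rpow_neg_boundary hφ₀ hφ₁ hφne hα0 ((hv xi).symm.trans hbc1)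
    ((hv xi1).symm.trans hbc2)
  refine ⟨fun x hx => ?_, fun x hx => ?_⟩
  · rw [(hflux.deriv isOpen_Ioo) (hsub hx), deriv_const]
  · exact (hflux (hsub hx)).trans (by rw [hC₂, mul_div_assoc])
end

section
/- Let α > 0 with α ≠ 1, let 0 < x_{N-1} < 1, and let u_{N-1}, u_N ∈ ℝ. For any ω ∈ ℝ, the function v(x) = ((1-x)^α/(1-x_{N-1})^α)(u_{N-1} - u_N) + u_N + (ω/(1-α))(1-x)(1 - ((1-x)/(1-x_{N-1}))^{α-1}) satisfies v(x_{N-1}) = u_{N-1}, is continuous up to x = 1 with v(1) = u_N, and solves ((1-x)v' + α v)' = ω on (x_{N-1}, 1). -/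
/-!
On `x < 1` the function `v` is `D (1 - x)^α + B (1 - x) + u_N` with `B = ω / (1 - α)` and a
constant `D`: the two homogeneous solutions `(1 - x)^α` (bounded at `1` since `α > 0`) and the
constant, plus a particular solution linear in `1 - x`. For this profile the flux
`(1 - x) v' + α v` is the affine function `(α - 1) B (1 - x) + α u_N`, whose derivative is `ω`.
-/

open Filter Set Topology

noncomputable def endpointProfile (α D B c x : ℝ) : ℝ := D * (1 - x) ^ α + B * (1 - x) + c

namespace endpointProfile

variable (α D B c : ℝ)

theorem hasDerivAt {y : ℝ} (hy : y < 1) :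
    HasDerivAt (endpointProfile α D B c) (-(D * (α * (1 - y) ^ (α - 1))) - B) y := by
  have hlin : HasDerivAt (fun x : ℝ => 1 - x) (-1) y := (hasDerivAt_id' y).const_sub 1
  have hpow : HasDerivAt (fun x : ℝ => (1 - x) ^ α) (α * (1 - y) ^ (α - 1) * -1) y :=
    (Real.hasDerivAt_rpow_const (Or.inl (sub_pos.2 hy).ne')).comp y hlin
  exact (((hpow.const_mul D).add (hlin.const_mul B)).add_const c).congr_deriv (by ring)

theorem flux_eq {y : ℝ} (hy : y < 1) :
    (1 - y) * deriv (endpointProfile α D B c) y + α * endpointProfile α D B c y =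
      (α - 1) * B * (1 - y) + α * c := by
  have hpow : (1 - y) * (1 - y) ^ (α - 1) = (1 - y) ^ α := by
    rw [Real.rpow_sub_one (sub_pos.2 hy).ne', mul_div_cancel₀ _ (sub_pos.2 hy).ne']
  rw [(hasDerivAt α D B c hy).deriv, endpointProfile]
  linear_combination (-(D * α)) * hpow

theorem tendsto_one {α : ℝ} (hα : 0 < α) :
    Tendsto (endpointProfile α D B c) (𝓝 1) (𝓝 c) := by
  have hcont : ContinuousAt (endpointProfile α D B c) 1 := by
    unfold endpointProfile
    have hpow : ContinuousAt (fun x : ℝ => (1 - x) ^ α) 1 :=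
      (Real.continuousAt_rpow_const _ α (Or.inr hα.le)).comp
        (continuousAt_const.sub continuousAt_id)
    fun_prop
  simpa [endpointProfile, Real.zero_rpow hα.ne'] using hcont.tendsto

end endpointProfile

theorem hasDerivAt_flux_of_eqOn_endpointProfile {α D B c x : ℝ} {v : ℝ → ℝ}
    (hv : EqOn v (endpointProfile α D B c) (Iio 1)) (hx : x < 1) :
    HasDerivAt (fun y => (1 - y) * deriv v y + α * v y) ((1 - α) * B) x := by
  have hflux : (fun y => (1 - y) * deriv v y + α * v y) =ᶠ[𝓝 x]
      fun y => (α - 1) * B * (1 - y) + α * c := by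
    filter_upwards [Iio_mem_nhds hx] with y hy
    have hvy : v =ᶠ[𝓝 y] endpointProfile α D B c :=
      eventuallyEq_of_mem (Iio_mem_nhds hy) hv
    rw [hvy.deriv_eq, hv hy, endpointProfile.flux_eq α D B c hy]
  refine HasDerivAt.congr_of_eventuallyEq ?_ hflux
  have hlin : HasDerivAt (fun y : ℝ => 1 - y) (-1) x := (hasDerivAt_id' x).const_sub 1
  exact ((hlin.const_mul ((α - 1) * B)).add_const (α * c)).congr_deriv (by ring)

theorem rpow_div_mul_add_mul_one_sub_div_rpow (α a B : ℝ) {t K : ℝ} (ht : 0 < t) (hK : 0 < K) :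
    t ^ α / K ^ α * a + B * t * (1 - (t / K) ^ (α - 1)) =
      (a / K ^ α - B / K ^ (α - 1)) * t ^ α + B * t := by
  have htα : t ^ α = t * t ^ (α - 1) := by
    rw [Real.rpow_sub_one ht.ne', mul_div_cancel₀ _ ht.ne']
  rw [Real.div_rpow ht.le hK.le]
  field_simp [(Real.rpow_pos_of_pos hK α).ne', (Real.rpow_pos_of_pos hK (α - 1)).ne']
  linear_combination (B * K ^ α) * htα

theorem stmt_8_general (α xN1 uN1 uN ω : ℝ) (hα : 0 < α) (hα1 : α ≠ 1)
    (h1 : xN1 < 1)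
    (v : ℝ → ℝ)
    (hv : ∀ x, v x = ((1 - x) ^ α / (1 - xN1) ^ α) * (uN1 - uN) + uN +
      (ω / (1 - α)) * (1 - x) * (1 - ((1 - x) / (1 - xN1)) ^ (α - 1))) :
    v xN1 = uN1 ∧
    Filter.Tendsto v (nhdsWithin 1 (Set.Iio 1)) (nhds uN) ∧
    v 1 = uN ∧
    (∀ x ∈ Set.Ioo xN1 1,
      deriv (fun y => (1 - y) * deriv v y + α * v y) x = ω) := by
  have hK : 0 < 1 - xN1 := sub_pos.2 h1
  set B := ω / (1 - α)
  set D := (uN1 - uN) / (1 - xN1) ^ α - B / (1 - xN1) ^ (α - 1)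
  have hprofile : EqOn v (endpointProfile α D B uN) (Iio 1) := fun x hx => by
    rw [hv, endpointProfile, add_right_comm,
      rpow_div_mul_add_mul_one_sub_div_rpow α _ B (sub_pos.2 (mem_Iio.1 hx)) hK]
  refine ⟨?_, ?_, ?_, fun x hx => ?_⟩
  · rw [hv, div_self hK.ne', Real.one_rpow, div_self (Real.rpow_pos_of_pos hK α).ne']
    ring
  · exact ((endpointProfile.tendsto_one D B uN hα).mono_left nhdsWithin_le_nhds).congr'
      (eventuallyEq_of_mem self_mem_nhdsWithin hprofile).symm
  · rw [hv, sub_self, Real.zero_rpow hα.ne']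
    ring
  · rw [(hasDerivAt_flux_of_eqOn_endpointProfile hprofile hx.2).deriv]
    exact mul_div_cancel₀ ω (sub_ne_zero.2 hα1.symm)

theorem stmt_8 (α xN1 uN1 uN ω : ℝ) (hα : 0 < α) (hα1 : α ≠ 1)
    (h0 : 0 < xN1) (h1 : xN1 < 1)
    (v : ℝ → ℝ)
    (hv : ∀ x, v x = ((1 - x) ^ α / (1 - xN1) ^ α) * (uN1 - uN) + uN +
      (ω / (1 - α)) * (1 - x) * (1 - ((1 - x) / (1 - xN1)) ^ (α - 1))) :
    v xN1 = uN1 ∧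
    Filter.Tendsto v (nhdsWithin 1 (Set.Iio 1)) (nhds uN) ∧
    v 1 = uN ∧
    (∀ x ∈ Set.Ioo xN1 1,
      deriv (fun y => (1 - y) * deriv v y + α * v y) x = ω) :=
  stmt_8_general α xN1 uN1 uN ω hα hα1 h1 v hv
end

section
/- (Gårding inequality) There exist constants α > 0 and γ ≥ 0 such that for all v ∈ C¹([0,1]) and all t ∈ [0,T]: A(v,v;t) ≥ α(‖v‖_{L²(0,1)}² + ∫₀¹ x²(1-x)² v'(x)² dx) − γ‖v‖_{L²(0,1)}², where A(w,v;t) = ∫₀¹ x(1-x)(a w' + b w) v' dx + ∫₀¹ c w v dx. -/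
open Set MeasureTheory

lemma quad_aux (A C b X Y s0 M : ℝ) (hs0 : 0 < s0) (hA : s0^2/4 ≤ A)
    (hC : M^2/s0^2 ≤ C) (hb : |b| ≤ M) : 0 ≤ A*X^2 + b*X*Y + C*Y^2 := by
  have hM : 0 ≤ M := (abs_nonneg b).trans hb
  have hb2 : b^2 ≤ M^2 := by nlinarith [sq_abs b, abs_nonneg b]
  have hA0 : 0 < A := lt_of_lt_of_le (by positivity) hA
  have hC0 : 0 ≤ C := le_trans (by positivity) hC
  have hmul : (s0^2/4)*(M^2/s0^2) ≤ A*C :=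
    mul_le_mul hA hC (by positivity) hA0.le
  have heq : (s0^2/4)*(M^2/s0^2) = M^2/4 := by field_simp
  have h4 : b^2 ≤ 4*A*C := by nlinarith
  nlinarith [sq_nonneg (2*A*X + b*Y), mul_nonneg (sub_nonneg.2 h4) (sq_nonneg Y)]

lemma ae_cong_int (f1 f2 : ℝ → ℝ) (h : ∀ x ∈ Ioo (0:ℝ) 1, f1 x = f2 x) :
    ∫ x in (0:ℝ)..1, f1 x = ∫ x in (0:ℝ)..1, f2 x := by
  apply intervalIntegral.integral_congr_ae
  rw [ae_iff]
  refine measure_mono_null (t := {(1:ℝ)}) ?_ (measure_singleton 1)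
  intro x hx
  simp only [mem_setOf_eq, Classical.not_imp] at hx
  rw [Set.uIoc_of_le (by norm_num : (0:ℝ) ≤ 1)] at hx
  by_contra hne
  simp only [mem_singleton_iff] at hne
  exact hx.2 (h x ⟨hx.1.1, lt_of_le_of_ne hx.1.2 hne⟩)

theorem stmt_14 (T σ0 : ℝ) (hT : 0 < T) (hσ0 : 0 < σ0)
    (σ r : ℝ → ℝ) (d : ℝ → ℝ → ℝ)
    (hσ : ContinuousOn σ (Icc 0 T)) (hσlb : ∀ t ∈ Icc 0 T, σ0 ≤ σ t)
    (hr : ContinuousOn r (Icc 0 T))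
    (hdc : ContinuousOn (fun p : ℝ × ℝ => d p.1 p.2) (Icc 0 1 ×ˢ Icc 0 T))
    (hdx : ContinuousOn (fun p : ℝ × ℝ => deriv (fun x => d x p.2) p.1)
      (Icc 0 1 ×ˢ Icc 0 T)) :
    ∃ α > (0:ℝ), ∃ γ ≥ (0:ℝ), ∀ v : ℝ → ℝ, ContDiffOn ℝ 1 v (Icc 0 1) →
      ∀ t ∈ Icc 0 T,
        (∫ x in (0:ℝ)..1, x * (1 - x) *
            (((σ t)^2 / 2 * x * (1 - x)) * deriv v x +
              (r t - d x t + (σ t)^2 * (2*x - 1)) * v x) * deriv v x)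
          + (∫ x in (0:ℝ)..1,
              ((2 - 3*x) * r t - (6*x^2 - 6*x + 1) * (σ t)^2
                - (1 - 3*x) * d x t - x * (1 - x) * deriv (fun y => d y t) x)
                * v x * v x)
        ≥ α * ((∫ x in (0:ℝ)..1, (v x)^2) +
            (∫ x in (0:ℝ)..1, x^2 * (1 - x)^2 * (deriv v x)^2))
          - γ * (∫ x in (0:ℝ)..1, (v x)^2) := by
  have hK : IsCompact ((Icc (0:ℝ) 1) ×ˢ (Icc (0:ℝ) T)) := isCompact_Icc.prod isCompact_Icc
  have hsub : ∀ p : ℝ × ℝ, p ∈ (Icc (0:ℝ) 1) ×ˢ (Icc (0:ℝ) T) → p.2 ∈ Icc (0:ℝ) T :=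
    fun p hp => hp.2
  have hrK : ContinuousOn (fun p : ℝ × ℝ => r p.2) ((Icc (0:ℝ) 1) ×ˢ (Icc (0:ℝ) T)) :=
    hr.comp continuous_snd.continuousOn hsub
  have hσK : ContinuousOn (fun p : ℝ × ℝ => σ p.2) ((Icc (0:ℝ) 1) ×ˢ (Icc (0:ℝ) T)) :=
    hσ.comp continuous_snd.continuousOn hsub
  have hB : ContinuousOn (fun p : ℝ × ℝ => r p.2 - d p.1 p.2 + (σ p.2)^2 * (2*p.1 - 1))
      ((Icc (0:ℝ) 1) ×ˢ (Icc (0:ℝ) T)) := by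
    exact (hrK.sub hdc).add ((hσK.pow 2).mul
      (((continuous_const.mul continuous_fst).sub continuous_const).continuousOn))
  have hp1 : Continuous (fun p : ℝ × ℝ => 2 - 3*p.1) := by fun_prop
  have hp2 : Continuous (fun p : ℝ × ℝ => 6*p.1^2 - 6*p.1 + 1) := by fun_prop
  have hp3 : Continuous (fun p : ℝ × ℝ => 1 - 3*p.1) := by fun_prop
  have hp4 : Continuous (fun p : ℝ × ℝ => p.1 * (1 - p.1)) := by fun_prop
  have hC : ContinuousOn (fun p : ℝ × ℝ => (2 - 3*p.1) * r p.2 - (6*p.1^2 - 6*p.1 + 1) * (σ p.2)^2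
      - (1 - 3*p.1) * d p.1 p.2 - p.1 * (1 - p.1) * deriv (fun x => d x p.2) p.1)
      ((Icc (0:ℝ) 1) ×ˢ (Icc (0:ℝ) T)) :=
    (((hp1.continuousOn.mul hrK).sub (hp2.continuousOn.mul (hσK.pow 2))).sub
      (hp3.continuousOn.mul hdc)).sub (hp4.continuousOn.mul hdx)
  obtain ⟨Mb, hMb⟩ := hK.exists_bound_of_continuousOn hB
  obtain ⟨Mc, hMc⟩ := hK.exists_bound_of_continuousOn hC
  set M : ℝ := max Mb (max Mc 0) with hMdef
  have hM0 : 0 ≤ M := le_trans (le_max_right _ _) (le_max_right _ _)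
  set α : ℝ := σ0^2/4 with hαdef
  have hα : 0 < α := by positivity
  set γ : ℝ := α + M + M^2/σ0^2 with hγdef
  have hγ : 0 ≤ γ := by positivity
  refine ⟨α, hα, γ, hγ, ?_⟩
  intro v hv t ht
  set g := derivWithin v (Icc (0:ℝ) 1) with hgdef
  have hgc : ContinuousOn g (Icc 0 1) :=
    hv.continuousOn_derivWithin (uniqueDiffOn_Icc one_pos) le_rfl
  have hvc : ContinuousOn v (Icc 0 1) := hv.continuousOn
  have hgd : ∀ x ∈ Ioo (0:ℝ) 1, deriv v x = g x := fun x hx =>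
    (derivWithin_of_mem_nhds (Icc_mem_nhds hx.1 hx.2)).symm
  -- replace deriv by g in the integrals
  have e1 : (∫ x in (0:ℝ)..1, x * (1 - x) *
        (((σ t)^2 / 2 * x * (1 - x)) * deriv v x +
          (r t - d x t + (σ t)^2 * (2*x - 1)) * v x) * deriv v x)
      = ∫ x in (0:ℝ)..1, x * (1 - x) *
        (((σ t)^2 / 2 * x * (1 - x)) * g x +
          (r t - d x t + (σ t)^2 * (2*x - 1)) * v x) * g x := by
    apply ae_cong_int
    intro x hx; rw [hgd x hx]
  have e2 : (∫ x in (0:ℝ)..1, x^2 * (1 - x)^2 * (deriv v x)^2)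
      = ∫ x in (0:ℝ)..1, x^2 * (1 - x)^2 * (g x)^2 := by
    apply ae_cong_int
    intro x hx; rw [hgd x hx]
  rw [e1, e2]
  -- integrability
  have hIcc : uIcc (0:ℝ) 1 = Icc 0 1 := uIcc_of_le (by norm_num)
  have hdt : ContinuousOn (fun x => d x t) (Icc (0:ℝ) 1) :=
    hdc.comp (Continuous.continuousOn (by fun_prop : Continuous fun x : ℝ => (x, t))) (fun x hx => ⟨hx, ht⟩)
  have hdxt : ContinuousOn (fun x => deriv (fun y => d y t) x) (Icc (0:ℝ) 1) :=
    hdx.comp (Continuous.continuousOn (by fun_prop : Continuous fun x : ℝ => (x, t))) (fun x hx => ⟨hx, ht⟩)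
  have iP : IntervalIntegrable (fun x => x * (1 - x) *
        (((σ t)^2 / 2 * x * (1 - x)) * g x +
          (r t - d x t + (σ t)^2 * (2*x - 1)) * v x) * g x) volume 0 1 := by
    apply ContinuousOn.intervalIntegrable
    rw [hIcc]
    have q1 : Continuous (fun x : ℝ => x * (1 - x)) := by fun_prop
    have q2 : Continuous (fun x : ℝ => (σ t)^2 / 2 * x * (1 - x)) := by fun_prop
    have q3 : Continuous (fun x : ℝ => r t + (σ t)^2 * (2*x - 1)) := by fun_prop
    refine (q1.continuousOn.mul (ContinuousOn.add (q2.continuousOn.mul hgc) ?_)).mul hgc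
    have : ContinuousOn (fun x : ℝ => r t - d x t + (σ t)^2 * (2*x - 1)) (Icc 0 1) :=
      ((continuousOn_const.sub hdt).add ((continuous_const.mul (by fun_prop : Continuous fun x : ℝ => 2*x - 1)).continuousOn))
    exact this.mul hvc
  have iQ : IntervalIntegrable (fun x =>
        ((2 - 3*x) * r t - (6*x^2 - 6*x + 1) * (σ t)^2
          - (1 - 3*x) * d x t - x * (1 - x) * deriv (fun y => d y t) x)
          * v x * v x) volume 0 1 := by
    apply ContinuousOn.intervalIntegrable
    rw [hIcc]
    have q1 : Continuous (fun x : ℝ => (2 - 3*x) * r t) := by fun_prop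
    have q2 : Continuous (fun x : ℝ => (6*x^2 - 6*x + 1) * (σ t)^2) := by fun_prop
    have q3 : Continuous (fun x : ℝ => 1 - 3*x) := by fun_prop
    have q4 : Continuous (fun x : ℝ => x * (1 - x)) := by fun_prop
    exact ((((q1.continuousOn.sub q2.continuousOn).sub
      (q3.continuousOn.mul hdt)).sub
      (q4.continuousOn.mul hdxt)).mul hvc).mul hvc
  have iV : IntervalIntegrable (fun x => (v x)^2) volume 0 1 := by
    apply ContinuousOn.intervalIntegrable
    rw [hIcc]; exact hvc.pow 2
  have iG : IntervalIntegrable (fun x => x^2 * (1 - x)^2 * (g x)^2) volume 0 1 := by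
    apply ContinuousOn.intervalIntegrable
    rw [hIcc]
    exact ((by fun_prop : Continuous fun x : ℝ => x^2 * (1 - x)^2).continuousOn).mul (hgc.pow 2)
  -- the key nonnegativity
  have key : 0 ≤ ∫ x in (0:ℝ)..1,
      (x * (1 - x) * (((σ t)^2 / 2 * x * (1 - x)) * g x +
          (r t - d x t + (σ t)^2 * (2*x - 1)) * v x) * g x
        + ((2 - 3*x) * r t - (6*x^2 - 6*x + 1) * (σ t)^2
            - (1 - 3*x) * d x t - x * (1 - x) * deriv (fun y => d y t) x) * v x * v x
        + (γ - α) * (v x)^2 - α * (x^2 * (1 - x)^2 * (g x)^2)) := by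
    apply intervalIntegral.integral_nonneg (by norm_num)
    intro x hx
    have hmem : (x, t) ∈ (Icc (0:ℝ) 1) ×ˢ (Icc (0:ℝ) T) := ⟨hx, ht⟩
    have hb : |r t - d x t + (σ t)^2 * (2*x - 1)| ≤ M := by
      have := hMb (x, t) hmem
      rw [Real.norm_eq_abs] at this
      exact this.trans (le_max_left _ _)
    have hc : |(2 - 3*x) * r t - (6*x^2 - 6*x + 1) * (σ t)^2
        - (1 - 3*x) * d x t - x * (1 - x) * deriv (fun y => d y t) x| ≤ M := by
      have := hMc (x, t) hmem
      rw [Real.norm_eq_abs] at this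
      exact this.trans ((le_max_left _ _).trans (le_max_right _ _))
    have hs : σ0 ≤ σ t := hσlb t ht
    set b := r t - d x t + (σ t)^2 * (2*x - 1) with hbdef
    set c := (2 - 3*x) * r t - (6*x^2 - 6*x + 1) * (σ t)^2
        - (1 - 3*x) * d x t - x * (1 - x) * deriv (fun y => d y t) x with hcdef
    set X := x * (1 - x) * g x with hXdef
    set Y := v x with hYdef
    have hA : σ0^2/4 ≤ (σ t)^2/2 - α := by nlinarith
    have hCc : M^2/σ0^2 ≤ c + (γ - α) := by
      have : -M ≤ c := neg_le_of_abs_le hc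
      rw [hγdef]; nlinarith
    have := quad_aux ((σ t)^2/2 - α) (c + (γ - α)) b X Y σ0 M hσ0 hA hCc hb
    have hexp : x * (1 - x) * (((σ t)^2 / 2 * x * (1 - x)) * g x + b * v x) * g x
        + c * v x * v x + (γ - α) * (v x)^2 - α * (x^2 * (1 - x)^2 * (g x)^2)
        = ((σ t)^2/2 - α) * X^2 + b * X * Y + (c + (γ - α)) * Y^2 := by
      rw [hXdef, hYdef]; ring
    linarith [hexp ▸ this]
  -- linearity
  have lin : (∫ x in (0:ℝ)..1,
      (x * (1 - x) * (((σ t)^2 / 2 * x * (1 - x)) * g x +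
          (r t - d x t + (σ t)^2 * (2*x - 1)) * v x) * g x
        + ((2 - 3*x) * r t - (6*x^2 - 6*x + 1) * (σ t)^2
            - (1 - 3*x) * d x t - x * (1 - x) * deriv (fun y => d y t) x) * v x * v x
        + (γ - α) * (v x)^2 - α * (x^2 * (1 - x)^2 * (g x)^2)))
      = (∫ x in (0:ℝ)..1, x * (1 - x) * (((σ t)^2 / 2 * x * (1 - x)) * g x +
          (r t - d x t + (σ t)^2 * (2*x - 1)) * v x) * g x)
        + (∫ x in (0:ℝ)..1, ((2 - 3*x) * r t - (6*x^2 - 6*x + 1) * (σ t)^2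
            - (1 - 3*x) * d x t - x * (1 - x) * deriv (fun y => d y t) x) * v x * v x)
        + (γ - α) * (∫ x in (0:ℝ)..1, (v x)^2)
        - α * (∫ x in (0:ℝ)..1, x^2 * (1 - x)^2 * (g x)^2) := by
    rw [intervalIntegral.integral_sub ((iP.add iQ).add (iV.const_mul (γ - α))) (iG.const_mul α),
      intervalIntegral.integral_add (iP.add iQ) (iV.const_mul (γ - α)),
      intervalIntegral.integral_add iP iQ,
      intervalIntegral.integral_const_mul, intervalIntegral.integral_const_mul]
  rw [lin] at key
  rw [ge_iff_le, mul_add]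
  linarith [key]
end
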